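/- arXiv:1810.09345 — 2 statements merged into one kernel-verified Lean document; each statement's English description precedes it below -/
import Mathlib

section
/- Let R be a Łukasiewicz near semiring with involution α, let ≤ be the induced order (x ≤ y iff x + y = y), and let a ∈ R. Define h_a(x) = α(x·α(a)). Then h_a is an antitone involution on the interval [a,1] = {x ∈ R : a ≤ x}: (i) if a ≤ x then a ≤ h_a(x); (ii) if a ≤ x, a ≤ y and x ≤ y then h_a(y) ≤ h_a(x); (iii) if a ≤ x then h_a(h_a(x)) = x. -/
/-- A near semiring: ⟨R, +, ·, 0, 1⟩ with ⟨R, +, 0⟩ a commutative monoid,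
⟨R, ·, 1⟩ a unital groupoid, right distributivity, and 0 annihilating. -/
structure NearSemiring (R : Type*) where
  add : R → R → R
  mul : R → R → R
  zero : R
  one : R
  add_assoc : ∀ x y z : R, add (add x y) z = add x (add y z)
  add_comm : ∀ x y : R, add x y = add y x
  add_zero : ∀ x : R, add x zero = x
  mul_one : ∀ x : R, mul x one = x
  one_mul : ∀ x : R, mul one x = x
  right_distrib : ∀ x y z : R, mul (add x y) z = add (mul x z) (mul y z)
  mul_zero : ∀ x : R, mul x zero = zero
  zero_mul : ∀ x : R, mul zero x = zero

/-- The induced relation: x ≤ y iff x + y = y. -/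
def NearSemiring.le {R : Type*} (S : NearSemiring R) (x y : R) : Prop :=
  S.add x y = y

/-- An involutive near semiring: an idempotent near semiring with an
antitone involution α (antitone w.r.t. the order x ≤ y iff x + y = y). -/
structure InvNearSemiring (R : Type*) extends NearSemiring R where
  add_idem : ∀ x : R, add x x = x
  alpha : R → R
  alpha_alpha : ∀ x : R, alpha (alpha x) = x
  alpha_antitone : ∀ x y : R, add x y = y → add (alpha y) (alpha x) = alpha x

/-- A Łukasiewicz near semiring: an involutive near semiring satisfying (Ł). -/
structure LukNearSemiring (R : Type*) extends InvNearSemiring R where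
  luk : ∀ x y : R,
    mul (alpha (mul x (alpha y))) (alpha y) = mul (alpha (mul y (alpha x))) (alpha x)

/-!
Right multiplication by α(a) is monotone and deflationary, and α is an antitone involution, so
h_a is antitone and maps [a, 1] into itself. For the involution law, a ≤ x forces
a·α(x) ≤ x·α(x) = 0, and then (Ł) at (x, a) reads α(x·α(a))·α(a) = α(0)·α(x) = α(x).
-/

namespace NearSemiring

variable {R : Type*} (S : NearSemiring R)

theorem zero_le (x : R) : S.le S.zero x := by
  rw [le, S.add_comm, S.add_zero]

theorem eq_zero_of_le_zero {x : R} (h : S.le x S.zero) : x = S.zero := by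
  rwa [le, S.add_zero] at h

theorem mul_le_mul_right {x y : R} (z : R) (h : S.le x y) : S.le (S.mul x z) (S.mul y z) := by
  rw [le, ← S.right_distrib, h]

end NearSemiring

namespace InvNearSemiring

variable {R : Type*} (S : InvNearSemiring R)

theorem alpha_le_alpha {x y : R} (h : S.le x y) : S.le (S.alpha y) (S.alpha x) :=
  S.alpha_antitone x y h

theorem le_alpha_of_le_alpha {x y : R} (h : S.le x (S.alpha y)) : S.le y (S.alpha x) := by
  simpa only [S.alpha_alpha] using S.alpha_le_alpha h

end InvNearSemiring

namespace LukNearSemiring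

variable {R : Type*} (S : LukNearSemiring R)

theorem alpha_zero_mul_alpha_one : S.mul (S.alpha S.zero) (S.alpha S.one) = S.zero := by
  simpa only [S.one_mul, S.alpha_alpha, S.zero_mul] using (S.luk S.one S.zero).symm

theorem alpha_one : S.alpha S.one = S.zero := by
  have hsq : S.mul (S.alpha S.one) (S.alpha S.one) = S.zero := by
    apply S.eq_zero_of_le_zero
    rw [← S.alpha_zero_mul_alpha_one]
    exact S.mul_le_mul_right _ (S.alpha_le_alpha (S.zero_le S.one))
  have h := S.luk S.one (S.alpha S.one)
  rwa [S.alpha_alpha, S.one_mul, S.mul_one, hsq, S.alpha_zero_mul_alpha_one] at h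

theorem alpha_zero : S.alpha S.zero = S.one := by
  rw [← S.alpha_one, S.alpha_alpha]

theorem le_one (x : R) : S.le x S.one := by
  simpa only [S.alpha_alpha, S.alpha_zero] using S.alpha_le_alpha (S.zero_le (S.alpha x))

theorem mul_le_right (x y : R) : S.le (S.mul x y) y := by
  simpa only [S.one_mul] using S.mul_le_mul_right y (S.le_one x)

theorem mul_alpha_self (x : R) : S.mul x (S.alpha x) = S.zero := by
  simpa only [S.alpha_one, S.mul_zero, S.one_mul, S.alpha_alpha] using (S.luk x S.one).symm

theorem mul_alpha_eq_zero_of_le {a x : R} (h : S.le a x) : S.mul a (S.alpha x) = S.zero :=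
  S.eq_zero_of_le_zero (S.mul_alpha_self x ▸ S.mul_le_mul_right (S.alpha x) h)

theorem alpha_mul_alpha_mul_alpha_of_le {a x : R} (h : S.le a x) :
    S.alpha (S.mul (S.alpha (S.mul x (S.alpha a))) (S.alpha a)) = x := by
  rw [S.luk x a, S.mul_alpha_eq_zero_of_le h, S.alpha_zero, S.one_mul, S.alpha_alpha]

end LukNearSemiring

/-- In a Łukasiewicz near semiring, the map h_a(x) = α(x·α(a)) is an antitone
involution on the interval [a, 1]. -/
theorem lukNearSemiring_sectional_involution {R : Type*} (S : LukNearSemiring R)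
    (a : R) :
    -- (i) h_a maps [a,1] into [a,1]
    (∀ x : R, S.le a x → S.le a (S.alpha (S.mul x (S.alpha a)))) ∧
    -- (ii) h_a is antitone on [a,1]
    (∀ x y : R, S.le a x → S.le a y → S.le x y →
      S.le (S.alpha (S.mul y (S.alpha a))) (S.alpha (S.mul x (S.alpha a)))) ∧
    -- (iii) h_a is an involution on [a,1]
    (∀ x : R, S.le a x →
      S.alpha (S.mul (S.alpha (S.mul x (S.alpha a))) (S.alpha a)) = x) := by
  refine ⟨fun x _ => ?_, fun x y _ _ hxy => ?_, fun x hax => ?_⟩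
  · exact S.le_alpha_of_le_alpha (S.mul_le_right x (S.alpha a))
  · exact S.alpha_le_alpha (S.mul_le_mul_right (S.alpha a) hxy)
  · exact S.alpha_mul_alpha_mul_alpha_of_le hax
end

section
/- Let R be an integral involutive near semiring with involution α, and let e ∈ R be an element satisfying, for all x, y, z, u ∈ R: (1) (e·α(x)) + (α(e)·α(y)) = α((e·x) + (α(e)·y)); and (2) (e·(x·z)) + (α(e)·(y·u)) = ((e·x) + (α(e)·y))·((e·z) + (α(e)·u)). Then for all x, y ∈ R: (i) (e·x) + α(e) = x + α(e); (ii) e·(e·x) = e·x = (e·x)·e; (iii) e·α(e) = 0; (iv) e·x = x·e; (v) e·(x + y) = (e·x) + (e·y); (vi) x ≤ y implies e·x ≤ e·y; (vii) e·(α(e)·x) = 0. -/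
/-!
Specialising the two identities at `0` and `1` shows that `e + α e = 1`, that `e · α e = 0`, and that
`x ↦ e · x` is multiplicative and idempotent. Hence `x = e · x + α e · x`, and since the cross terms
`(α e · x) · e` vanish, `x · e = e · x`; left distributivity then follows from right distributivity.
The hypotheses are symmetric under `e ↔ α e`, so every property also holds for `α e`, which gives (i).
-/

theorem NearSemiring.zero_add {R : Type*} (S : NearSemiring R) (x : R) : S.add S.zero x = x := by
  rw [S.add_comm, S.add_zero]

namespace InvNearSemiring

variable {R : Type*} (S : InvNearSemiring R)

/-- In the integral case `1` is the top element, so the antitone involution sends it to the bottom. -/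
theorem alpha_one (integral : ∀ x : R, S.add x S.one = S.one) : S.alpha S.one = S.zero := by
  have h := S.alpha_antitone (S.alpha S.zero) S.one (integral _)
  rwa [S.alpha_alpha, S.add_zero] at h

theorem alpha_zero (integral : ∀ x : R, S.add x S.one = S.one) : S.alpha S.zero = S.one := by
  rw [← S.alpha_one integral, S.alpha_alpha]

/-- Here `f` stands for `α e`; keeping it a separate element makes the conditions symmetric in
`e` and `f` (see `IsCentralPair.symm`). -/
structure IsCentralPair (e f : R) : Prop where
  alpha_right : S.alpha f = e
  map_alpha : ∀ x y : R,
    S.add (S.mul e (S.alpha x)) (S.mul f (S.alpha y)) = S.alpha (S.add (S.mul e x) (S.mul f y))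
  map_mul : ∀ x y z u : R,
    S.add (S.mul e (S.mul x z)) (S.mul f (S.mul y u)) =
      S.mul (S.add (S.mul e x) (S.mul f y)) (S.add (S.mul e z) (S.mul f u))

namespace IsCentralPair

variable {S} {e f : R}

theorem symm (h : S.IsCentralPair e f) : S.IsCentralPair f e where
  alpha_right := by rw [← h.alpha_right, S.alpha_alpha]
  map_alpha x y := by rw [S.add_comm, h.map_alpha y x, S.add_comm (S.mul e y)]
  map_mul x y z u := by
    rw [S.add_comm, h.map_mul y x u z, S.add_comm (S.mul e y), S.add_comm (S.mul e u)]

theorem add_eq_one (h : S.IsCentralPair e f) (integral : ∀ x : R, S.add x S.one = S.one) :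
    S.add e f = S.one := by
  have h00 := h.map_alpha S.zero S.zero
  rwa [S.alpha_zero integral, S.mul_one, S.mul_one, S.mul_zero, S.mul_zero, S.add_zero,
    S.alpha_zero integral] at h00

theorem mul_add_mul_self (h : S.IsCentralPair e f) (integral : ∀ x : R, S.add x S.one = S.one)
    (x : R) : S.add (S.mul e x) (S.mul f x) = x := by
  rw [← S.right_distrib, h.add_eq_one integral, S.one_mul]

theorem mul_mul (h : S.IsCentralPair e f) (x z : R) :
    S.mul e (S.mul x z) = S.mul (S.mul e x) (S.mul e z) := by
  have hx0z0 := h.map_mul x S.zero z S.zero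
  rwa [S.zero_mul, S.mul_zero, S.add_zero, S.add_zero, S.add_zero] at hx0z0

theorem mul_mul_self (h : S.IsCentralPair e f) (x : R) : S.mul e (S.mul e x) = S.mul e x := by
  simpa only [S.one_mul, S.mul_one] using (h.mul_mul S.one x).symm

theorem mul_mul_right_self (h : S.IsCentralPair e f) (x : R) :
    S.mul e x = S.mul (S.mul e x) e := by
  simpa only [S.mul_one] using h.mul_mul x S.one

theorem mul_self (h : S.IsCentralPair e f) : S.mul e e = e := by
  simpa only [S.mul_one] using (h.mul_mul_right_self S.one).symm

theorem mul_eq_zero (h : S.IsCentralPair e f) (integral : ∀ x : R, S.add x S.one = S.one) :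
    S.mul e f = S.zero := by
  have hf0 := h.map_alpha f S.zero
  rw [h.alpha_right, S.alpha_zero integral, S.mul_one, S.mul_zero, S.add_zero, h.mul_self,
    h.add_eq_one integral] at hf0
  rw [← S.alpha_alpha (S.mul e f), ← hf0, S.alpha_one integral]

theorem mul_mul_eq_zero (h : S.IsCentralPair e f) (integral : ∀ x : R, S.add x S.one = S.one)
    (x : R) : S.mul e (S.mul f x) = S.zero := by
  rw [h.mul_mul, h.mul_eq_zero integral, S.zero_mul]

theorem mul_mul_left_eq_zero (h : S.IsCentralPair e f) (x : R) :
    S.mul (S.mul f x) e = S.zero := by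
  have h0x10 := h.map_mul S.zero x S.one S.zero
  rw [S.zero_mul, S.mul_zero, S.mul_zero, S.mul_zero, S.mul_one, S.add_zero, S.add_zero,
    S.zero_add] at h0x10
  exact h0x10.symm

theorem mul_comm (h : S.IsCentralPair e f) (integral : ∀ x : R, S.add x S.one = S.one) (x : R) :
    S.mul e x = S.mul x e := by
  conv_rhs => rw [← h.mul_add_mul_self integral x]
  rw [S.right_distrib, ← h.mul_mul_right_self, h.mul_mul_left_eq_zero, S.add_zero]

theorem mul_add (h : S.IsCentralPair e f) (integral : ∀ x : R, S.add x S.one = S.one) (x y : R) :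
    S.mul e (S.add x y) = S.add (S.mul e x) (S.mul e y) := by
  rw [h.mul_comm integral, S.right_distrib, ← h.mul_comm integral, ← h.mul_comm integral]

theorem mul_le_mul (h : S.IsCentralPair e f) (integral : ∀ x : R, S.add x S.one = S.one)
    {x y : R} (hxy : S.le x y) : S.le (S.mul e x) (S.mul e y) := by
  rw [NearSemiring.le, ← h.mul_add integral, hxy]

theorem mul_le (h : S.IsCentralPair e f) (integral : ∀ x : R, S.add x S.one = S.one) (x : R) :
    S.le (S.mul e x) e := by
  simpa only [S.mul_one] using h.mul_le_mul integral (integral x)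

theorem mul_add_right (h : S.IsCentralPair e f) (integral : ∀ x : R, S.add x S.one = S.one)
    (x : R) : S.add (S.mul e x) f = S.add x f := by
  conv_rhs => rw [← h.mul_add_mul_self integral x]
  rw [S.add_assoc, h.symm.mul_le integral x]

end IsCentralPair

theorem isCentralPair_alpha {e : R}
    (h1 : ∀ x y : R,
      S.add (S.mul e (S.alpha x)) (S.mul (S.alpha e) (S.alpha y)) =
      S.alpha (S.add (S.mul e x) (S.mul (S.alpha e) y)))
    (h2 : ∀ x y z u : R,
      S.add (S.mul e (S.mul x z)) (S.mul (S.alpha e) (S.mul y u)) =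
      S.mul (S.add (S.mul e x) (S.mul (S.alpha e) y))
            (S.add (S.mul e z) (S.mul (S.alpha e) u))) :
    S.IsCentralPair e (S.alpha e) :=
  ⟨S.alpha_alpha e, h1, h2⟩

end InvNearSemiring

/-- Properties of an element e of an integral involutive near semiring
satisfying the two central-element identities. -/
theorem integralInvNearSemiring_central_props {R : Type*} (S : InvNearSemiring R)
    (integral : ∀ x : R, S.add x S.one = S.one) (e : R)
    (h1 : ∀ x y : R,
      S.add (S.mul e (S.alpha x)) (S.mul (S.alpha e) (S.alpha y)) =
      S.alpha (S.add (S.mul e x) (S.mul (S.alpha e) y)))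
    (h2 : ∀ x y z u : R,
      S.add (S.mul e (S.mul x z)) (S.mul (S.alpha e) (S.mul y u)) =
      S.mul (S.add (S.mul e x) (S.mul (S.alpha e) y))
            (S.add (S.mul e z) (S.mul (S.alpha e) u))) :
    -- (i)
    (∀ x : R, S.add (S.mul e x) (S.alpha e) = S.add x (S.alpha e)) ∧
    -- (ii)
    (∀ x : R, S.mul e (S.mul e x) = S.mul e x) ∧
    (∀ x : R, S.mul e x = S.mul (S.mul e x) e) ∧
    -- (iii)
    (S.mul e (S.alpha e) = S.zero) ∧
    -- (iv)
    (∀ x : R, S.mul e x = S.mul x e) ∧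
    -- (v)
    (∀ x y : R, S.mul e (S.add x y) = S.add (S.mul e x) (S.mul e y)) ∧
    -- (vi)
    (∀ x y : R, S.le x y → S.le (S.mul e x) (S.mul e y)) ∧
    -- (vii)
    (∀ x : R, S.mul e (S.mul (S.alpha e) x) = S.zero) := by
  have h := S.isCentralPair_alpha h1 h2
  exact ⟨h.mul_add_right integral, h.mul_mul_self, h.mul_mul_right_self, h.mul_eq_zero integral,
    h.mul_comm integral, h.mul_add integral, fun _ _ => h.mul_le_mul integral,
    h.mul_mul_eq_zero integral⟩
end
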